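/- arXiv:0803.1541 — 4 statements merged into one kernel-verified Lean document; each statement's English description precedes it below -/
import Mathlib

section
/- Let (Y, d_Y) be a metric space. Then the function ρ((p,s),(q,t)) = 2·log((d_Y(p,q) + max(s,t))/√(s·t)) is a metric on Y × (0, ∞): it is nonnegative, symmetric, satisfies the triangle inequality ρ(x,z) ≤ ρ(x,y) + ρ(y,z) for all x,y,z ∈ Y × (0,∞), and ρ(x,y) = 0 if and only if x = y. -/
/-!
Write `ρ = 2 log R` with `R((p,s),(q,t)) = (d(p,q) + max(s,t)) / √(st)`. Since `√(st) ≤ max(s,t)`,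
`R ≥ 1`, with equality only on the diagonal. The triangle inequality for `ρ` is the
multiplicativity `R(x,z) ≤ R(x,y) R(y,z)`: the denominators satisfy `√(st) √(tu) = t √(su)`, and
for the numerators `t (d(p,r) + max(s,u)) ≤ (d(p,q) + max(s,t)) (d(q,r) + max(t,u))` follows from
the triangle inequality of `d`, `t ≤ max(s,t), max(t,u)` and `t max(s,u) ≤ max(s,t) max(t,u)`.
-/

open Set

/-- The Balogh–Schramm distance on `Y × (0, ∞)`:
`ρ((p,s),(q,t)) = 2·log((d_Y(p,q) + max(s,t))/√(s·t))`. -/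
noncomputable def BS {Y : Type*} [MetricSpace Y] (x y : Y × ℝ) : ℝ :=
  2 * Real.log ((dist x.1 y.1 + max x.2 y.2) / Real.sqrt (x.2 * y.2))

open Real

lemma sqrt_mul_le_max {s t : ℝ} (hs : 0 ≤ s) : √(s * t) ≤ max s t := by
  have hmax : 0 ≤ max s t := le_max_of_le_left hs
  rw [← min_mul_max s t]
  calc √(min s t * max s t) ≤ √(max s t * max s t) :=
        sqrt_le_sqrt (mul_le_mul_of_nonneg_right min_le_max hmax)
    _ = max s t := sqrt_mul_self hmax

lemma sqrt_mul_lt_max {s t : ℝ} (hs : 0 ≤ s) (ht : 0 ≤ t) (hst : s ≠ t) :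
    √(s * t) < max s t := by
  have hlt : min s t < max s t := min_lt_max.mpr hst
  have hmin : 0 ≤ min s t := le_min hs ht
  rw [← min_mul_max s t]
  calc √(min s t * max s t) < √(max s t * max s t) :=
        sqrt_lt_sqrt (mul_nonneg hmin (hmin.trans hlt.le))
          (mul_lt_mul_of_pos_right hlt (hmin.trans_lt hlt))
    _ = max s t := sqrt_mul_self (hmin.trans hlt.le)

lemma mul_max_le_max_mul_max {s t u : ℝ} (hs : 0 ≤ s) (ht : 0 ≤ t) (hu : 0 ≤ u) :
    t * max s u ≤ max s t * max t u := by
  rw [mul_max_of_nonneg _ _ ht]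
  refine max_le ?_ ?_
  · rw [mul_comm]
    exact mul_le_mul (le_max_left s t) (le_max_left t u) ht (le_max_of_le_left hs)
  · exact mul_le_mul (le_max_right s t) (le_max_right t u) hu (le_max_of_le_right ht)

lemma mul_add_max_le_add_max_mul_add_max {d₁ d₂ d₃ s t u : ℝ} (hd₁ : 0 ≤ d₁) (hd₂ : 0 ≤ d₂)
    (hd₃ : d₃ ≤ d₁ + d₂) (hs : 0 ≤ s) (ht : 0 ≤ t) (hu : 0 ≤ u) :
    t * (d₃ + max s u) ≤ (d₁ + max s t) * (d₂ + max t u) := by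
  have hM := mul_max_le_max_mul_max hs ht hu
  have h₁ : t * d₁ ≤ max t u * d₁ := mul_le_mul_of_nonneg_right (le_max_left t u) hd₁
  have h₂ : t * d₂ ≤ max s t * d₂ := mul_le_mul_of_nonneg_right (le_max_right s t) hd₂
  nlinarith [mul_le_mul_of_nonneg_left hd₃ ht, mul_nonneg hd₁ hd₂]

section Ratio

variable {Y : Type*}

noncomputable def bsRatio [PseudoMetricSpace Y] (x y : Y × ℝ) : ℝ :=
  (dist x.1 y.1 + max x.2 y.2) / √(x.2 * y.2)

lemma BS_eq_two_mul_log_bsRatio [MetricSpace Y] (x y : Y × ℝ) :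
    BS x y = 2 * log (bsRatio x y) := rfl

variable [PseudoMetricSpace Y] {x y z : Y × ℝ}

lemma bsRatio_comm (x y : Y × ℝ) : bsRatio x y = bsRatio y x := by
  rw [bsRatio, bsRatio, dist_comm, max_comm, mul_comm]

lemma one_le_bsRatio (hx : 0 < x.2) (hy : 0 < y.2) : 1 ≤ bsRatio x y := by
  rw [bsRatio, one_le_div (sqrt_pos.mpr (mul_pos hx hy))]
  exact (sqrt_mul_le_max hx.le).trans (le_add_of_nonneg_left dist_nonneg)

lemma bsRatio_self (hx : 0 < x.2) : bsRatio x x = 1 := by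
  rw [bsRatio, dist_self, zero_add, max_self, sqrt_mul_self hx.le, div_self hx.ne']

lemma bsRatio_le_mul_bsRatio (hx : 0 < x.2) (hy : 0 < y.2) (hz : 0 < z.2) :
    bsRatio x z ≤ bsRatio x y * bsRatio y z := by
  obtain ⟨p, s⟩ := x
  obtain ⟨q, t⟩ := y
  obtain ⟨r, u⟩ := z
  dsimp only at hx hy hz
  have hden : √(s * t) * √(t * u) = t * √(s * u) := by
    rw [← sqrt_mul (mul_nonneg hx.le hy.le), show s * t * (t * u) = t * t * (s * u) by ring,
      sqrt_mul (mul_self_nonneg t), sqrt_mul_self hy.le]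
  calc bsRatio (p, s) (r, u) = t * (dist p r + max s u) / (√(s * t) * √(t * u)) := by
        rw [hden, mul_div_mul_left _ _ hy.ne', bsRatio]
    _ ≤ (dist p q + max s t) * (dist q r + max t u) / (√(s * t) * √(t * u)) := by
        gcongr ?_ / _
        exact mul_add_max_le_add_max_mul_add_max dist_nonneg dist_nonneg (dist_triangle p q r)
          hx.le hy.le hz.le
    _ = bsRatio (p, s) (q, t) * bsRatio (q, t) (r, u) := (div_mul_div_comm _ _ _ _).symm

end Ratio

lemma one_lt_bsRatio {Y : Type*} [MetricSpace Y] {x y : Y × ℝ} (hx : 0 < x.2) (hy : 0 < y.2)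
    (hxy : x ≠ y) : 1 < bsRatio x y := by
  rw [bsRatio, one_lt_div (sqrt_pos.mpr (mul_pos hx hy))]
  by_cases h₁ : x.1 = y.1
  · exact (sqrt_mul_lt_max hx.le hy.le fun h₂ ↦ hxy (Prod.ext h₁ h₂)).trans_le
      (le_add_of_nonneg_left dist_nonneg)
  · exact (sqrt_mul_le_max hx.le).trans_lt (lt_add_of_pos_left _ (dist_pos.mpr h₁))

/-- the Balogh–Schramm distance is a metric on Y × (0,∞):
nonnegative, symmetric, triangle inequality, and vanishing exactly on the diagonal. -/
theorem stmt0 {Y : Type*} [MetricSpace Y] :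
    (∀ x y : Y × ℝ, 0 < x.2 → 0 < y.2 → 0 ≤ BS x y) ∧
    (∀ x y : Y × ℝ, 0 < x.2 → 0 < y.2 → BS x y = BS y x) ∧
    (∀ x y z : Y × ℝ, 0 < x.2 → 0 < y.2 → 0 < z.2 → BS x z ≤ BS x y + BS y z) ∧
    (∀ x y : Y × ℝ, 0 < x.2 → 0 < y.2 → (BS x y = 0 ↔ x = y)) := by
  simp only [BS_eq_two_mul_log_bsRatio]
  refine ⟨fun x y hx hy ↦ ?_, fun x y _ _ ↦ by rw [bsRatio_comm], fun x y z hx hy hz ↦ ?_,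
    fun x y hx hy ↦ ⟨fun h ↦ ?_, ?_⟩⟩
  · exact mul_nonneg zero_le_two (log_nonneg (one_le_bsRatio hx hy))
  · have hxy := zero_lt_one.trans_le (one_le_bsRatio hx hy)
    have hyz := zero_lt_one.trans_le (one_le_bsRatio hy hz)
    rw [← mul_add, ← log_mul hxy.ne' hyz.ne']
    gcongr
    · exact zero_lt_one.trans_le (one_le_bsRatio hx hz)
    · exact bsRatio_le_mul_bsRatio hx hy hz
  · by_contra hxy
    exact (mul_pos zero_lt_two (log_pos (one_lt_bsRatio hx hy hxy))).ne' h
  · rintro rfl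
    rw [bsRatio_self hx, log_one, mul_zero]
end

section
/- Let (Y, d_Y) be a metric space and ρ the Balogh–Schramm distance on Y × (0, ∞). Then ρ satisfies the Gromov four-point condition with δ = log 4: for all x₁, x₂, x₃, x₄ ∈ Y × (0, ∞), ρ(x₁,x₂) + ρ(x₃,x₄) ≤ max(ρ(x₁,x₃) + ρ(x₂,x₄), ρ(x₁,x₄) + ρ(x₂,x₃)) + 2·log 4. -/
/-!
Put `D(x, y) = d_Y(p, q) + max(s, t)` for `x = (p, s)`, `y = (q, t)`, so that
`ρ(x, y) = 2 log D(x, y) - log s - log t`. In the four-point condition the `log s` terms cancel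
and it becomes `D₁₂ D₃₄ ≤ 4 max(D₁₃ D₂₄, D₁₄ D₂₃)`. Since `D` satisfies the triangle inequality,
this holds: if, say, `D₁₃` is the least of `D₁₃, D₂₄, D₁₄, D₂₃`, then
`D₁₂ ≤ D₁₃ + D₂₃ ≤ 2 D₂₃` and `D₃₄ ≤ D₁₃ + D₁₄ ≤ 2 D₁₄`.
-/

open Set

theorem mul_le_four_mul_or_mul_le_four_mul {u v a b c e : ℝ} (hu : 0 ≤ u) (hv : 0 ≤ v)
    (hu₁ : u ≤ a + e) (hu₂ : u ≤ c + b) (hv₁ : v ≤ a + c) (hv₂ : v ≤ e + b) :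
    u * v ≤ 4 * (a * b) ∨ u * v ≤ 4 * (c * e) := by
  have bound {x y : ℝ} (hx : u ≤ 2 * x) (hy : v ≤ 2 * y) : u * v ≤ 4 * (x * y) := by
    nlinarith
  rcases le_total a e with hae | hea
  · rcases le_total a c with hac | hca
    · exact .inr (by rw [mul_comm c]; exact bound (by linarith) (by linarith))
    · rcases le_total c b with hcb | hbc
      · exact .inl (by rw [mul_comm a]; exact bound (by linarith) (by linarith))
      · exact .inr (bound (by linarith) (by linarith))
  · rcases le_total e b with heb | hbe
    · exact .inl (bound (by linarith) (by linarith))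
    · rcases le_total b c with hbc | hcb
      · exact .inr (bound (by linarith) (by linarith))
      · exact .inl (by rw [mul_comm a]; exact bound (by linarith) (by linarith))

section BaloghSchramm

variable {Y : Type*} [MetricSpace Y]

def bsNumerator (x y : Y × ℝ) : ℝ := dist x.1 y.1 + max x.2 y.2

theorem bsNumerator_comm (x y : Y × ℝ) : bsNumerator x y = bsNumerator y x := by
  rw [bsNumerator, bsNumerator, dist_comm, max_comm]

theorem bsNumerator_pos {x y : Y × ℝ} (hx : 0 < x.2) : 0 < bsNumerator x y :=
  add_pos_of_nonneg_of_pos dist_nonneg (lt_max_of_lt_left hx)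

theorem bsNumerator_le_add {x y : Y × ℝ} (z : Y × ℝ) (hx : 0 ≤ x.2) (hy : 0 ≤ y.2) :
    bsNumerator x y ≤ bsNumerator x z + bsNumerator z y := by
  have hmax : max x.2 y.2 ≤ max x.2 z.2 + max z.2 y.2 :=
    max_le (le_add_of_le_of_nonneg (le_max_left _ _) (hy.trans (le_max_right _ _)))
      (le_add_of_nonneg_of_le (hx.trans (le_max_left _ _)) (le_max_right _ _))
  unfold bsNumerator
  linarith [dist_triangle x.1 z.1 y.1]

theorem bsNumerator_four_point {x₁ x₂ x₃ x₄ : Y × ℝ}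
    (h₁ : 0 < x₁.2) (h₂ : 0 < x₂.2) (h₃ : 0 < x₃.2) (h₄ : 0 < x₄.2) :
    bsNumerator x₁ x₂ * bsNumerator x₃ x₄ ≤ 4 * (bsNumerator x₁ x₃ * bsNumerator x₂ x₄) ∨
      bsNumerator x₁ x₂ * bsNumerator x₃ x₄ ≤ 4 * (bsNumerator x₁ x₄ * bsNumerator x₂ x₃) := by
  refine mul_le_four_mul_or_mul_le_four_mul (bsNumerator_pos h₁).le (bsNumerator_pos h₃).le
    ?_ ?_ ?_ ?_
  · simpa only [bsNumerator_comm x₃ x₂] using bsNumerator_le_add x₃ h₁.le h₂.le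
  · simpa only [bsNumerator_comm x₄ x₂] using bsNumerator_le_add x₄ h₁.le h₂.le
  · simpa only [bsNumerator_comm x₃ x₁] using bsNumerator_le_add x₁ h₃.le h₄.le
  · simpa only [bsNumerator_comm x₃ x₂] using bsNumerator_le_add x₂ h₃.le h₄.le

theorem BS_comm (x y : Y × ℝ) : BS x y = BS y x := by
  rw [BS, BS, dist_comm, max_comm, mul_comm x.2]

theorem BS_eq_log_bsNumerator {x y : Y × ℝ} (hx : 0 < x.2) (hy : 0 < y.2) :
    BS x y = 2 * Real.log (bsNumerator x y) - Real.log x.2 - Real.log y.2 := by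
  rw [BS, ← bsNumerator,
    Real.log_div (bsNumerator_pos hx).ne' (Real.sqrt_ne_zero'.mpr (mul_pos hx hy)),
    Real.log_sqrt (mul_pos hx hy).le, Real.log_mul hx.ne' hy.ne']
  ring

theorem BS_add_BS_le_of_bsNumerator_mul_le {a b c d : Y × ℝ}
    (ha : 0 < a.2) (hb : 0 < b.2) (hc : 0 < c.2) (hd : 0 < d.2)
    (h : bsNumerator a b * bsNumerator c d ≤ 4 * (bsNumerator a c * bsNumerator b d)) :
    BS a b + BS c d ≤ BS a c + BS b d + 2 * Real.log 4 := by
  have hlog := Real.log_le_log (mul_pos (bsNumerator_pos ha) (bsNumerator_pos hc)) h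
  rw [Real.log_mul (bsNumerator_pos ha).ne' (bsNumerator_pos hc).ne',
    Real.log_mul four_ne_zero (mul_pos (bsNumerator_pos ha) (bsNumerator_pos hb)).ne',
    Real.log_mul (bsNumerator_pos ha).ne' (bsNumerator_pos hb).ne'] at hlog
  rw [BS_eq_log_bsNumerator ha hb, BS_eq_log_bsNumerator hc hd, BS_eq_log_bsNumerator ha hc,
    BS_eq_log_bsNumerator hb hd]
  linarith

end BaloghSchramm

/-- the Balogh–Schramm distance satisfies the Gromov four-point
condition with δ = log 4. -/
theorem stmt1 {Y : Type*} [MetricSpace Y] (x₁ x₂ x₃ x₄ : Y × ℝ)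
    (h₁ : 0 < x₁.2) (h₂ : 0 < x₂.2) (h₃ : 0 < x₃.2) (h₄ : 0 < x₄.2) :
    BS x₁ x₂ + BS x₃ x₄ ≤
      max (BS x₁ x₃ + BS x₂ x₄) (BS x₁ x₄ + BS x₂ x₃) + 2 * Real.log 4 := by
  rcases bsNumerator_four_point h₁ h₂ h₃ h₄ with h | h
  · exact (BS_add_BS_le_of_bsNumerator_mul_le h₁ h₂ h₃ h₄ h).trans (by gcongr; exact le_max_left _ _)
  · rw [bsNumerator_comm x₃] at h
    have hBS := BS_add_BS_le_of_bsNumerator_mul_le h₁ h₂ h₄ h₃ h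
    rw [BS_comm x₄] at hBS
    exact hBS.trans (by gcongr; exact le_max_right _ _)
end

section
/- Suppose r : Fin 4 → Fin 4 → ℝ satisfies r i j ≥ 0, r i j = r j i, and r i j ≤ r i k + r k j for all i, j, k. Then r 0 1 · r 2 3 ≤ 4 · max(r 0 2 · r 1 3, r 0 3 · r 1 2). -/
/-!
Write `a = r 0 1`, `b = r 2 3` and `x = r 0 2`, `y = r 1 3`, `u = r 0 3`, `v = r 1 2`.
The triangle inequalities through the opposite pair give `a ≤ x + v`, `a ≤ u + y`,
`b ≤ x + u`, `b ≤ v + y`, so `a / 2` and `b / 2` are bounded by the larger term of each sum.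
In every combination of these bounds (after comparing `a` with `b` if needed), `a / 2` and
`b / 2` are dominated by the two members of one opposite pair `{x, y}` or `{u, v}`,
which bounds `(a / 2) * (b / 2)` by `x * y` or `u * v`.
-/

lemma half_le_max_of_le_add {a x y : ℝ} (h : a ≤ x + y) : a / 2 ≤ max x y := by
  linarith [le_max_left x y, le_max_right x y]

lemma mul_le_max_mul_of_le_max_of_le_max {A B x y u v : ℝ} (hA : 0 ≤ A) (hB : 0 ≤ B)
    (hAxv : A ≤ max x v) (hAuy : A ≤ max u y) (hBxu : B ≤ max x u) (hBvy : B ≤ max v y) :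
    A * B ≤ max (x * y) (u * v) := by
  have hmul {p q : ℝ} (hp : A ≤ p) (hq : B ≤ q) : A * B ≤ p * q :=
    mul_le_mul hp hq hB (hA.trans hp)
  rw [le_max_iff] at hAxv hAuy hBxu hBvy
  -- Only when `A` is bounded by one opposite pair and `B` by the other does the matching
  -- depend on the order of `A` and `B`.
  rcases hAxv with hAx | hAv <;> rcases hAuy with hAu | hAy <;>
    rcases hBxu with hBx | hBu <;> rcases hBvy with hBv | hBy <;>
    first
      | exact le_max_of_le_left (hmul (p := x) (q := y) ‹_› ‹_›)
      | exact le_max_of_le_left ((hmul (p := y) (q := x) ‹_› ‹_›).trans_eq (mul_comm y x))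
      | exact le_max_of_le_right (hmul (p := u) (q := v) ‹_› ‹_›)
      | exact le_max_of_le_right ((hmul (p := v) (q := u) ‹_› ‹_›).trans_eq (mul_comm v u))
      | rcases le_total A B with hAB | hBA
        · exact le_max_of_le_left (hmul (hAB.trans ‹B ≤ x›) ‹B ≤ y›)
        · exact le_max_of_le_right (hmul ‹A ≤ u› (hBA.trans ‹A ≤ v›))
      | rcases le_total A B with hAB | hBA
        · exact le_max_of_le_right (hmul (hAB.trans ‹B ≤ u›) ‹B ≤ v›)
        · exact le_max_of_le_left (hmul ‹A ≤ x› (hBA.trans ‹A ≤ y›))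

/-- for a nonnegative symmetric array satisfying the triangle
inequality in its indices, `r 0 1 · r 2 3 ≤ 4 · max(r 0 2 · r 1 3, r 0 3 · r 1 2)`. -/
theorem stmt2 (r : Fin 4 → Fin 4 → ℝ)
    (hnonneg : ∀ i j, 0 ≤ r i j)
    (hsymm : ∀ i j, r i j = r j i)
    (htri : ∀ i j k, r i j ≤ r i k + r k j) :
    r 0 1 * r 2 3 ≤ 4 * max (r 0 2 * r 1 3) (r 0 3 * r 1 2) := by
  have h012 : r 0 1 / 2 ≤ max (r 0 2) (r 1 2) := by
    rw [hsymm 1 2]; exact half_le_max_of_le_add (htri 0 1 2)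
  have h013 : r 0 1 / 2 ≤ max (r 0 3) (r 1 3) := by
    rw [hsymm 1 3]; exact half_le_max_of_le_add (htri 0 1 3)
  have h230 : r 2 3 / 2 ≤ max (r 0 2) (r 0 3) := by
    rw [hsymm 0 2]; exact half_le_max_of_le_add (htri 2 3 0)
  have h231 : r 2 3 / 2 ≤ max (r 1 2) (r 1 3) := by
    rw [hsymm 1 2]; exact half_le_max_of_le_add (htri 2 3 1)
  have hhalves := mul_le_max_mul_of_le_max_of_le_max
    (div_nonneg (hnonneg 0 1) zero_le_two) (div_nonneg (hnonneg 2 3) zero_le_two)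
    h012 h013 h230 h231
  calc r 0 1 * r 2 3 = 4 * (r 0 1 / 2 * (r 2 3 / 2)) := by ring
    _ ≤ 4 * max (r 0 2 * r 1 3) (r 0 3 * r 1 2) := by gcongr
end

section
/- Let (Y, d_Y) be a compact geodesic metric space and M > 0. Let d_ℓ be the induced length metric on X_M = Y × (0, M] associated to the Balogh–Schramm distance ρ. Then there exists a constant C ≥ 0 such that for all x, y ∈ X_M: ρ(x,y) ≤ d_ℓ(x,y) ≤ ρ(x,y) + C. -/
open Set

/-- Length of the map `γ` over the set `S` with respect to the distance
function `d`: the supremum over finite monotone partitions in `S` of the sums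
of consecutive distances (as in Mathlib's `eVariationOn`). -/
noncomputable def lengthOn {X : Type*} (d : X → X → ℝ) (γ : ℝ → X) (S : Set ℝ) : ENNReal :=
  ⨆ p : ℕ × { u : ℕ → ℝ // Monotone u ∧ ∀ i, u i ∈ S },
    ∑ i ∈ Finset.range p.1, ENNReal.ofReal (d (γ (p.2.1 i)) (γ (p.2.1 (i + 1))))

/-- Membership in `X_M = Y × (0, M]`. -/
def inXM {Y : Type*} (M : ℝ) (x : Y × ℝ) : Prop := 0 < x.2 ∧ x.2 ≤ M

/-- The induced length metric on `X_M = Y × (0, M]`: the infimum of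
Balogh–Schramm lengths of continuous paths joining `x` and `y` inside `X_M`. -/
noncomputable def dLen {Y : Type*} [MetricSpace Y] (M : ℝ) (x y : Y × ℝ) : ℝ :=
  (sInf {L : ENNReal | ∃ (a b : ℝ) (γ : ℝ → Y × ℝ), a ≤ b ∧
      ContinuousOn γ (Icc a b) ∧ γ a = x ∧ γ b = y ∧
      (∀ t ∈ Icc a b, inXM M (γ t)) ∧
      lengthOn (BS (Y := Y)) γ (Icc a b) = L}).toReal

/-- A metric space is geodesic: any two points are joined by an isometric
embedding of `[0, dist p q]`. -/
def GeodesicSpace (Y : Type*) [MetricSpace Y] : Prop :=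
  ∀ p q : Y, ∃ α : ℝ → Y, α 0 = p ∧ α (dist p q) = q ∧
    ∀ s ∈ Icc (0:ℝ) (dist p q), ∀ t ∈ Icc (0:ℝ) (dist p q), dist (α s) (α t) = |s - t|

/-- The Gromov product `(x,y)_ω` with respect to the length metric `dLen M`. -/
noncomputable def gromovProd {Y : Type*} [MetricSpace Y] (M : ℝ) (ω x y : Y × ℝ) : ℝ :=
  (dLen M x ω + dLen M y ω - dLen M x y) / 2

open Real

/-!
A path's length dominates the `BS`-distance of its endpoints, which gives the lower bound.
For the upper bound, climb from `(p, s)` to height `h = min (d(p, q) + max s r) M`, cross along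
a geodesic at that height and descend to `(q, r)`. Along this path every `BS`-distance is
dominated by the increment of the potential
`2 · (horizontal progress) / h + log (rising height) - log (falling height)`:
horizontally because `log (D + h) ≤ D / h + log h`, vertically because `log ∘ min` is
`1`-Lipschitz for the `ℓ¹` norm. The total increment `2 d(p, q) / h + 2 log h - log s - log r`
exceeds `BS` by at most `2 + 2 diam Y / M`.
-/

lemma log_add_le_div_add_log {x h : ℝ} (hx : 0 ≤ x) (hh : 0 < h) :
    log (x + h) ≤ x / h + log h := by
  have hq : log ((x + h) / h) ≤ (x + h) / h - 1 := log_le_sub_one_of_pos (by positivity)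
  rw [log_div (by positivity) hh.ne'] at hq
  rw [add_div, div_self hh.ne'] at hq
  linarith

lemma div_min_add_le_one_add_div {d D m M : ℝ} (hd : 0 ≤ d) (hdD : d ≤ D) (hm : 0 < m)
    (hM : 0 < M) : d / min (d + m) M ≤ 1 + D / M := by
  rcases min_cases (d + m) M with ⟨hmin, -⟩ | ⟨hmin, -⟩ <;> rw [hmin]
  · linarith [(div_le_one (by linarith)).2 (by linarith : d ≤ d + m),
      div_nonneg (hd.trans hdD) hM.le]
  · linarith [div_le_div_of_nonneg_right hdD hM.le]

lemma ofReal_le_lengthOn {X : Type*} (d : X → X → ℝ) (γ : ℝ → X) {S : Set ℝ} {a b : ℝ}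
    (ha : a ∈ S) (hb : b ∈ S) (hab : a ≤ b) :
    ENNReal.ofReal (d (γ a) (γ b)) ≤ lengthOn d γ S := by
  let u : ℕ → ℝ := fun i => if i = 0 then a else b
  have hu : Monotone u := by
    intro i j hij
    by_cases hi : i = 0 <;> by_cases hj : j = 0 <;> simp [u, hi, hj, hab]; omega
  have hS : ∀ i, u i ∈ S := fun i => by by_cases hi : i = 0 <;> simp [u, hi, ha, hb]
  simpa [lengthOn, u] using le_iSup (fun p : ℕ × { u : ℕ → ℝ // Monotone u ∧ ∀ i, u i ∈ S } =>
    ∑ i ∈ Finset.range p.1, ENNReal.ofReal (d (γ (p.2.1 i)) (γ (p.2.1 (i + 1)))))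
    (1, ⟨u, hu, hS⟩)

lemma lengthOn_le_of_le_sub {X : Type*} (d : X → X → ℝ) (γ : ℝ → X) {a b : ℝ} {f : ℝ → ℝ}
    (hf : MonotoneOn f (Icc a b))
    (hd : ∀ u ∈ Icc a b, ∀ v ∈ Icc a b, u ≤ v → d (γ u) (γ v) ≤ f v - f u) :
    lengthOn d γ (Icc a b) ≤ ENNReal.ofReal (f b - f a) := by
  refine iSup_le fun ⟨n, u, hu, huS⟩ => ?_
  have hab : a ≤ b := (huS 0).1.trans (huS 0).2
  have hstep : ∀ i, 0 ≤ f (u (i + 1)) - f (u i) :=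
    fun i => sub_nonneg.2 (hf (huS i) (huS (i + 1)) (hu i.le_succ))
  calc ∑ i ∈ Finset.range n, ENNReal.ofReal (d (γ (u i)) (γ (u (i + 1))))
      ≤ ∑ i ∈ Finset.range n, ENNReal.ofReal (f (u (i + 1)) - f (u i)) :=
        Finset.sum_le_sum fun i _ =>
          ENNReal.ofReal_le_ofReal (hd _ (huS i) _ (huS (i + 1)) (hu i.le_succ))
    _ = ENNReal.ofReal (f (u n) - f (u 0)) := by
        rw [← ENNReal.ofReal_sum_of_nonneg fun i _ => hstep i,
          Finset.sum_range_sub (fun i => f (u i))]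
    _ ≤ ENNReal.ofReal (f b - f a) := by
        have hfa := hf ⟨le_rfl, hab⟩ (huS 0) (huS 0).1
        have hfb := hf (huS n) ⟨hab, le_rfl⟩ (huS n).2
        exact ENNReal.ofReal_le_ofReal (by linarith)

section

variable {Y : Type*} [MetricSpace Y]

lemma BS_le_dLen_le_of_path {M L a b : ℝ} {x y : Y × ℝ}
    {γ : ℝ → Y × ℝ} (hab : a ≤ b) (hγ : ContinuousOn γ (Icc a b)) (hγa : γ a = x)
    (hγb : γ b = y) (hγM : ∀ t ∈ Icc a b, inXM M (γ t))
    (hL : 0 ≤ L) (hlen : lengthOn BS γ (Icc a b) ≤ ENNReal.ofReal L) :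
    BS x y ≤ dLen M x y ∧ dLen M x y ≤ L := by
  set S := {L : ENNReal | ∃ (a b : ℝ) (γ : ℝ → Y × ℝ), a ≤ b ∧
      ContinuousOn γ (Icc a b) ∧ γ a = x ∧ γ b = y ∧
      (∀ t ∈ Icc a b, inXM M (γ t)) ∧ lengthOn (BS (Y := Y)) γ (Icc a b) = L}
  have hub : sInf S ≤ ENNReal.ofReal L :=
    (sInf_le (show _ ∈ S from ⟨a, b, γ, hab, hγ, hγa, hγb, hγM, rfl⟩)).trans hlen
  have hlb : ENNReal.ofReal (BS x y) ≤ sInf S := by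
    refine le_sInf ?_
    rintro _ ⟨a, b, γ, hab, -, hγa, hγb, -, hlen⟩
    rw [← hlen, ← hγa, ← hγb]
    exact ofReal_le_lengthOn _ _ ⟨le_rfl, hab⟩ ⟨hab, le_rfl⟩ hab
  have hfin : sInf S ≠ ⊤ := ne_top_of_le_ne_top ENNReal.ofReal_ne_top hub
  exact ⟨(ENNReal.ofReal_le_iff_le_toReal hfin).1 hlb, ENNReal.toReal_le_of_le_ofReal hL hub⟩

lemma BS_eq {x y : Y × ℝ} (hx : 0 < x.2) (hy : 0 < y.2) :
    BS x y = 2 * log (dist x.1 y.1 + max x.2 y.2) - log x.2 - log y.2 := by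
  rw [BS, log_div (by positivity) (by positivity), log_sqrt (by positivity),
    log_mul hx.ne' hy.ne']
  ring

lemma BS_nonneg {x y : Y × ℝ} (hx : 0 < x.2) (hy : 0 < y.2) : 0 ≤ BS x y := by
  have hmax : log (max x.2 y.2) ≤ log (dist x.1 y.1 + max x.2 y.2) :=
    log_le_log (by positivity) (le_add_of_nonneg_left dist_nonneg)
  have hx' := log_le_log hx (le_max_left x.2 y.2)
  have hy' := log_le_log hy (le_max_right x.2 y.2)
  rw [BS_eq hx hy]
  linarith

lemma BS_eq_abs_log_sub {y : Y} {s t : ℝ} (hs : 0 < s) (ht : 0 < t) :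
    BS (y, s) (y, t) = |log s - log t| := by
  rw [BS_eq hs ht, dist_self, zero_add]
  rcases le_total s t with hst | hts
  · rw [max_eq_right hst, abs_of_nonpos (by linarith [log_le_log hs hst])]
    ring
  · rw [max_eq_left hts, abs_of_nonneg (by linarith [log_le_log ht hts])]
    ring

lemma BS_le_of_le {x y : Y × ℝ} {h : ℝ} (hx : 0 < x.2) (hy : 0 < y.2) (hxh : x.2 ≤ h)
    (hyh : y.2 ≤ h) :
    BS x y ≤ 2 * dist x.1 y.1 / h + 2 * log h - log x.2 - log y.2 := by
  have hh : 0 < h := hx.trans_le hxh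
  have hmono : log (dist x.1 y.1 + max x.2 y.2) ≤ log (dist x.1 y.1 + h) :=
    log_le_log (by positivity) (by gcongr; exact max_le hxh hyh)
  have hlog := log_add_le_div_add_log (dist_nonneg (x := x.1) (y := y.1)) hh
  rw [BS_eq hx hy, mul_div_assoc]
  linarith

lemma log_min_of_pos {a b : ℝ} (ha : 0 < a) (hb : 0 < b) :
    log (min a b) = min (log a) (log b) := by
  rcases le_total a b with hab | hba
  · rw [min_eq_left hab, min_eq_left (log_le_log ha hab)]
  · rw [min_eq_right hba, min_eq_right (log_le_log hb hba)]

/-- `a₁ ≤ b₁` is a rising and `b₂ ≤ a₂` a falling height; the base point may only move while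
both are at the cruising height `h`. -/
lemma BS_le_of_min {y₁ y₂ : Y} {a₁ a₂ b₁ b₂ h : ℝ} (ha₁ : 0 < a₁) (hb₂ : 0 < b₂)
    (hab₁ : a₁ ≤ b₁) (hba₂ : b₂ ≤ a₂) (hmove : y₁ ≠ y₂ → b₁ = h ∧ a₂ = h) :
    BS (y₁, min a₁ a₂) (y₂, min b₁ b₂) ≤
      2 * dist y₁ y₂ / h + (log b₁ - log a₁) + (log a₂ - log b₂) := by
  have ha₂ := hb₂.trans_le hba₂
  have hb₁ := ha₁.trans_le hab₁
  by_cases hy : y₁ = y₂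
  · subst hy
    have hrise : 0 ≤ log b₁ - log a₁ := sub_nonneg.2 (log_le_log ha₁ hab₁)
    have hfall : 0 ≤ log a₂ - log b₂ := sub_nonneg.2 (log_le_log hb₂ hba₂)
    have hmin := abs_min_sub_min_le_max (log a₁) (log a₂) (log b₁) (log b₂)
    rw [abs_sub_comm (log a₁), abs_of_nonneg hrise, abs_of_nonneg hfall] at hmin
    rw [BS_eq_abs_log_sub (lt_min ha₁ ha₂) (lt_min hb₁ hb₂), dist_self, mul_zero, zero_div,
      zero_add, log_min_of_pos ha₁ ha₂, log_min_of_pos hb₁ hb₂]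
    exact hmin.trans (max_le_add_of_nonneg hrise hfall)
  · obtain ⟨hb₁h, ha₂h⟩ := hmove hy
    have ha₁h : a₁ ≤ h := hb₁h ▸ hab₁
    have hb₂h : b₂ ≤ h := ha₂h ▸ hba₂
    rw [min_eq_left (ha₂h ▸ ha₁h), min_eq_right (hb₁h ▸ hb₂h)]
    have := BS_le_of_le (x := (y₁, a₁)) (y := (y₂, b₂)) ha₁ hb₂ ha₁h hb₂h
    rw [hb₁h, ha₂h]
    linarith

lemma left_lt_and_lt_right_of_projIcc_lt {a b u v : ℝ} (hab : a ≤ b)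
    (hlt : projIcc a b hab u < projIcc a b hab v) : a < v ∧ u < b := by
  constructor
  · by_contra! hv
    rw [projIcc_of_le_left hab hv] at hlt
    exact not_le.2 hlt (projIcc a b hab u).2.1
  · by_contra! hu
    rw [projIcc_of_right_le hab hu] at hlt
    exact not_le.2 hlt (projIcc a b hab v).2.2

theorem exists_path_lengthOn_BS_le {α : ℝ → Y} {d s r h : ℝ} (hd : 0 ≤ d)
    (hα : Isometry ((Icc 0 d).domRestrict α)) (hs : 0 < s) (hr : 0 < r) (hsh : s ≤ h)
    (hrh : r ≤ h) :
    ∃ (L : ℝ) (γ : ℝ → Y × ℝ), 0 ≤ L ∧ ContinuousOn γ (Icc 0 L) ∧ γ 0 = (α 0, s) ∧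
      γ L = (α d, r) ∧ (∀ t ∈ Icc 0 L, inXM h (γ t)) ∧
      lengthOn BS γ (Icc 0 L) ≤ ENNReal.ofReal (2 * d / h + 2 * log h - log s - log r) := by
  set L := (h - s) + d + (h - r)
  set pos : ℝ → Icc 0 d := fun t => projIcc 0 d hd (t - (h - s))
  set up : ℝ → ℝ := fun t => min (s + t) h
  set down : ℝ → ℝ := fun t => min (r + (L - t)) h
  set γ : ℝ → Y × ℝ := fun t => ((Icc 0 d).domRestrict α (pos t), min (up t) (down t))
  set f : ℝ → ℝ := fun t => 2 * pos t / h + log (up t) - log (down t)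
  have hup : ∀ t ∈ Icc 0 L, 0 < up t := fun t ht => lt_min (by linarith [ht.1]) (by linarith)
  have hdown : ∀ t ∈ Icc 0 L, 0 < down t := fun t ht => lt_min (by linarith [ht.2]) (by linarith)
  have hkey : ∀ u ∈ Icc 0 L, ∀ v ∈ Icc 0 L, u ≤ v → BS (γ u) (γ v) ≤ f v - f u := by
    intro u hu v hv huv
    have hpos : pos u ≤ pos v := monotone_projIcc hd (sub_le_sub_right huv _)
    have hdist : dist (α (pos u)) (α (pos v)) = (pos v : ℝ) - pos u := by
      have := hα.dist_eq (pos u) (pos v)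
      rwa [domRestrict_apply, domRestrict_apply, Subtype.dist_eq, Real.dist_eq, abs_sub_comm,
        abs_of_nonneg (sub_nonneg.2 (Subtype.coe_le_coe.2 hpos))] at this
    have hmove : α (pos u) ≠ α (pos v) → up v = h ∧ down u = h := by
      intro hne
      obtain ⟨hv', hu'⟩ := left_lt_and_lt_right_of_projIcc_lt hd
        (hpos.lt_of_ne fun heq => hne (congrArg (fun t : Icc 0 d => α t) heq))
      exact ⟨min_eq_right (by linarith), min_eq_right (by linarith)⟩
    have hBS := BS_le_of_min (h := h) (hup u hu) (hdown v hv)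
      (min_le_min_right _ (by linarith)) (min_le_min_right _ (by linarith)) hmove
    rw [hdist] at hBS
    calc BS (γ u) (γ v) ≤ _ := hBS
      _ = f v - f u := by simp only [f]; ring
  have hf : MonotoneOn f (Icc 0 L) := fun u hu v hv huv =>
    sub_nonneg.1 <| (BS_nonneg (lt_min (hup u hu) (hdown u hu))
      (lt_min (hup v hv) (hdown v hv))).trans (hkey u hu v hv huv)
  have hpos₀ : (pos 0 : ℝ) = 0 := by
    simp [pos, projIcc_of_le_left hd (show 0 - (h - s) ≤ 0 by linarith)]
  have hposL : (pos L : ℝ) = d := by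
    simp [pos, projIcc_of_right_le hd (show d ≤ L - (h - s) by linarith)]
  have hup₀ : up 0 = s := by simp [up, hsh]
  have hupL : up L = h := min_eq_right (by linarith)
  have hdown₀ : down 0 = h := min_eq_right (by linarith)
  have hdownL : down L = r := by simp [down, hrh]
  refine ⟨L, γ, by linarith, Continuous.continuousOn ?_, ?_, ?_, fun t ht => ?_,
    (lengthOn_le_of_le_sub _ _ hf hkey).trans (ENNReal.ofReal_le_ofReal (le_of_eq ?_))⟩
  · exact (hα.continuous.comp (continuous_projIcc.comp (continuous_id.sub continuous_const))).prodMk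
      (by fun_prop)
  · simp [γ, hpos₀, hup₀, hdown₀, hsh]
  · simp [γ, hposL, hupL, hdownL, hrh]
  · exact ⟨lt_min (hup t ht) (hdown t ht), (min_le_left _ _).trans (min_le_right _ _)⟩
  · simp only [f, hpos₀, hposL, hup₀, hupL, hdown₀, hdownL]
    ring

end

/-- on a compact geodesic space `Y`, the induced length metric on
`X_M` is within an additive constant of the Balogh–Schramm distance. -/
theorem stmt3 {Y : Type*} [MetricSpace Y] [CompactSpace Y] (hgeo : GeodesicSpace Y)
    {M : ℝ} (hM : 0 < M) :
    ∃ C : ℝ, 0 ≤ C ∧ ∀ x y : Y × ℝ, inXM M x → inXM M y →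
      BS x y ≤ dLen M x y ∧ dLen M x y ≤ BS x y + C := by
  set D := Metric.diam (univ : Set Y)
  refine ⟨2 + 2 * D / M, by positivity, ?_⟩
  rintro ⟨p, s⟩ ⟨q, r⟩ (⟨hs, hsM⟩ : 0 < s ∧ s ≤ M) (⟨hr, hrM⟩ : 0 < r ∧ r ≤ M)
  obtain ⟨α, hα₀, hαd, hαiso⟩ := hgeo p q
  have hα : Isometry ((Icc 0 (dist p q)).domRestrict α) := Isometry.of_dist_eq fun u v => by
    simpa [Subtype.dist_eq, Real.dist_eq] using hαiso u u.2 v v.2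
  set h := min (dist p q + max s r) M
  have hsh : s ≤ h := le_min (le_add_of_nonneg_of_le dist_nonneg (le_max_left s r)) hsM
  have hrh : r ≤ h := le_min (le_add_of_nonneg_of_le dist_nonneg (le_max_right s r)) hrM
  obtain ⟨L, γ, hL, hγ, hγ₀, hγL, hγh, hlen⟩ :=
    exists_path_lengthOn_BS_le dist_nonneg hα hs hr hsh hrh
  rw [hα₀] at hγ₀
  rw [hαd] at hγL
  refine BS_le_dLen_le_of_path hL hγ hγ₀ hγL
    (fun t ht => ⟨(hγh t ht).1, (hγh t ht).2.trans (min_le_right _ _)⟩)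
    (add_nonneg (BS_nonneg hs hr) (by positivity)) (hlen.trans (ENNReal.ofReal_le_ofReal ?_))
  have hdh := div_min_add_le_one_add_div dist_nonneg
    (Metric.dist_le_diam_of_mem isCompact_univ.isBounded (mem_univ p) (mem_univ q))
    (hs.trans_le (le_max_left s r)) hM
  have hlogh : log h ≤ log (dist p q + max s r) := log_le_log (hs.trans_le hsh) (min_le_left _ _)
  rw [BS_eq hs hr, mul_div_assoc, mul_div_assoc]
  linarith
end
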